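/- Let M ∈ ℝ^{(q+s)×(q+s)} be symmetric with blocks M₁₁, M₁₂, M₂₂ where M₂₂ ⪰ 0, and let N ∈ ℝ^{(q+s)×(q+s)} be symmetric with N₂₂ ⪰ 0, N₁₁ − N₁₂ N₂₂† N₁₂ᵀ = 0, and ker(N₂₂) ⊆ ker(N₁₂). If there exist α ≥ 0 and β > 0 such that M − αN ⪯ diag(−β I_q, 0_{s×s}), then [I_q, Z] M [I_q, Z]ᵀ ≺ 0 for every Z ∈ ℝ^{q×s} satisfying [I_q, Z] N [I_q, Z]ᵀ = 0. -/

import Mathlib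

open Matrix

/-- Negative definiteness of a real matrix. -/
def Matrix.NegDef {n : Type*} [Fintype n] (M : Matrix n n ℝ) : Prop := (-M).PosDef

/-- Matrix Finsler lemma, direction (ii) ⇒ (i): if M − αN ⪯ diag(−β I_q, 0) for some
α ≥ 0 and β > 0, then [I_q, Z] M [I_q, Z]ᵀ ≺ 0 for every Z with [I_q, Z] N [I_q, Z]ᵀ = 0. -/
theorem matrix_finsler_sufficiency {q s : ℕ}
    (M₁₁ : Matrix (Fin q) (Fin q) ℝ) (M₁₂ : Matrix (Fin q) (Fin s) ℝ)
    (M₂₂ : Matrix (Fin s) (Fin s) ℝ)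
    (N₁₁ : Matrix (Fin q) (Fin q) ℝ) (N₁₂ : Matrix (Fin q) (Fin s) ℝ)
    (N₂₂ : Matrix (Fin s) (Fin s) ℝ)
    (hM11 : M₁₁ᵀ = M₁₁) (hM22 : M₂₂.PosSemidef)
    (hN11 : N₁₁ᵀ = N₁₁) (hN22 : N₂₂.PosSemidef)
    (Npinv : Matrix (Fin s) (Fin s) ℝ)
    (hmp1 : N₂₂ * Npinv * N₂₂ = N₂₂) (hmp2 : Npinv * N₂₂ * Npinv = Npinv)
    (hmp3 : (N₂₂ * Npinv)ᵀ = N₂₂ * Npinv) (hmp4 : (Npinv * N₂₂)ᵀ = Npinv * N₂₂)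
    (hSchur : N₁₁ - N₁₂ * Npinv * N₁₂ᵀ = 0)
    (hker : ∀ v : Fin s → ℝ, N₂₂.mulVec v = 0 → N₁₂.mulVec v = 0)
    (α β : ℝ) (hα : 0 ≤ α) (hβ : 0 < β)
    (hle : (Matrix.fromBlocks (-β • (1 : Matrix (Fin q) (Fin q) ℝ)) 0 0
              (0 : Matrix (Fin s) (Fin s) ℝ) -
            (Matrix.fromBlocks M₁₁ M₁₂ M₁₂ᵀ M₂₂ -
              α • Matrix.fromBlocks N₁₁ N₁₂ N₁₂ᵀ N₂₂)).PosSemidef) :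
    ∀ Z : Matrix (Fin q) (Fin s) ℝ,
      Matrix.fromCols (1 : Matrix (Fin q) (Fin q) ℝ) Z *
          Matrix.fromBlocks N₁₁ N₁₂ N₁₂ᵀ N₂₂ *
          (Matrix.fromCols (1 : Matrix (Fin q) (Fin q) ℝ) Z)ᵀ = 0 →
      (Matrix.fromCols (1 : Matrix (Fin q) (Fin q) ℝ) Z *
          Matrix.fromBlocks M₁₁ M₁₂ M₁₂ᵀ M₂₂ *
          (Matrix.fromCols (1 : Matrix (Fin q) (Fin q) ℝ) Z)ᵀ).NegDef := by
  intro Z hZ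
  set F : Matrix (Fin q) (Fin q ⊕ Fin s) ℝ := Matrix.fromCols 1 Z with hF
  set MM : Matrix (Fin q ⊕ Fin s) (Fin q ⊕ Fin s) ℝ :=
    Matrix.fromBlocks M₁₁ M₁₂ M₁₂ᵀ M₂₂ with hMM
  set NN : Matrix (Fin q ⊕ Fin s) (Fin q ⊕ Fin s) ℝ :=
    Matrix.fromBlocks N₁₁ N₁₂ N₁₂ᵀ N₂₂ with hNN
  have hFH : Fᴴ = Fᵀ := Matrix.conjTranspose_eq_transpose_of_trivial F
  have H := hle.mul_mul_conjTranspose_same F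
  rw [hFH] at H
  -- compute F * Dβ * Fᵀ = -β • 1
  have hD : F * Matrix.fromBlocks (-β • (1 : Matrix (Fin q) (Fin q) ℝ)) 0 0
      (0 : Matrix (Fin s) (Fin s) ℝ) * Fᵀ = -β • (1 : Matrix (Fin q) (Fin q) ℝ) := by
    rw [hF, Matrix.fromCols_mul_fromBlocks, Matrix.transpose_fromCols,
      Matrix.fromCols_mul_fromRows]
    simp
  have key : F * (Matrix.fromBlocks (-β • (1 : Matrix (Fin q) (Fin q) ℝ)) 0 0
      (0 : Matrix (Fin s) (Fin s) ℝ) - (MM - α • NN)) * Fᵀ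
      = -β • (1 : Matrix (Fin q) (Fin q) ℝ) - F * MM * Fᵀ := by
    rw [Matrix.mul_sub, Matrix.sub_mul, hD, Matrix.mul_sub, Matrix.sub_mul]
    rw [Matrix.mul_smul, Matrix.smul_mul, hZ]
    simp
  rw [key] at H
  rw [Matrix.NegDef]
  have : -(F * MM * Fᵀ) = (-β • (1 : Matrix (Fin q) (Fin q) ℝ) - F * MM * Fᵀ)
      + β • (1 : Matrix (Fin q) (Fin q) ℝ) := by
    rw [neg_smul, sub_eq_add_neg]; abel
  rw [this]
  have hβ1 : (β • (1 : Matrix (Fin q) (Fin q) ℝ)).PosDef := by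
    refine ⟨?_, fun x hx => ?_⟩
    · show (β • (1 : Matrix (Fin q) (Fin q) ℝ))ᴴ = _
      simp
    · exact (Matrix.PosDef.one.smul hβ).2 hx
  exact Matrix.PosDef.posSemidef_add H hβ1
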